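/- For every index p ∈ {1,…,d}, the cross term between the strictly lower and strictly upper triangular parts satisfies: (i) for n = 0, E[ (Σ_{i>j} A_{i,j} u_i u_j) · (Σ_{k<ℓ} A_{k,ℓ} u_k u_ℓ) ] = Σ_{i>j} A_{i,j} A_{j,i}; (ii) for n = 1, E[ (Σ_{i>j} A_{i,j} u_i u_j u_p) · (Σ_{k<ℓ} A_{k,ℓ} u_k u_ℓ u_p) ] = Σ_{i>j} A_{i,j} A_{j,i} + 2·Σ_{i : i>p} A_{i,p} A_{p,i} + 2·Σ_{j : j<p} A_{p,j} A_{j,p}; (iii) for n = 2, E[ (Σ_{i>j} A_{i,j} u_i u_j u_p²) · (Σ_{k<ℓ} A_{k,ℓ} u_k u_ℓ u_p²) ] = 3·Σ_{i>j} A_{i,j} A_{j,i} + 12·Σ_{i : i>p} A_{i,p} A_{p,i} + 12·Σ_{j : j<p} A_{p,j} A_{j,p}. Here Σ_{i>j} ranges over pairs with 1 ≤ j < i ≤ d and Σ_{k<ℓ} over pairs with 1 ≤ k < ℓ ≤ d. -/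

import Mathlib

open MeasureTheory ProbabilityTheory Finset

noncomputable def stdGaussianVec (d : ℕ) : Measure (Fin d → ℝ) :=
  Measure.pi fun _ => gaussianReal 0 1

/-!
Expanding the product, the integrand becomes a combination of the monomials
`u i * u j * u k * u l * u p ^ (2 * n)` with `j < i` and `k < l`. By independence of the
coordinates, the expectation of a monomial is the product of the one-dimensional moments of its
exponents, so it vanishes unless every exponent is even; for such indices this forces
`(k, l) = (j, i)`. The surviving monomial `u i ^ 2 * u j ^ 2 * u p ^ (2 * n)` has expectation
`(2 * n + 1)‼` if `p ∈ {i, j}` and `(2 * n - 1)‼` otherwise, the moments `(2 * k - 1)‼` of the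
standard Gaussian coming from `Γ (k + 1 / 2)`.
-/

open Real
open scoped NNReal Nat

section Algebra

variable {ι R : Type*} [Fintype ι] [LinearOrder ι] [CommRing R]

theorem sum_lower_mul_sum_upper_mul_eq_sum (A : Matrix ι ι R) (u : ι → R) (w : R) :
    (∑ i, ∑ j ∈ univ.filter (· < i), A i j * u i * u j)
        * (∑ k, ∑ l ∈ univ.filter (k < ·), A k l * u k * u l) * w
      = ∑ i, ∑ j ∈ univ.filter (· < i), ∑ k, ∑ l ∈ univ.filter (k < ·),
          A i j * A k l * (u i * u j * u k * u l * w) := by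
  rw [sum_mul_sum, sum_mul]
  refine sum_congr rfl fun i _ => ?_
  simp only [sum_mul]
  rw [sum_comm]
  refine sum_congr rfl fun j _ => sum_congr rfl fun k _ => ?_
  rw [mul_sum, sum_mul]
  exact sum_congr rfl fun l _ => by ring

theorem sum_lower_mul_ite_add_ite (x : ι → ι → R) (p : ι) :
    ∑ i, ∑ j ∈ univ.filter (· < i), x i j * ((if p = i then 1 else 0) + (if p = j then 1 else 0))
      = ∑ i ∈ univ.filter (p < ·), x i p + ∑ j ∈ univ.filter (· < p), x p j := by
  simp [mul_add, sum_add_distrib, sum_filter, add_comm]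

end Algebra

theorem integral_pow_mul_exp_neg_sq_div_two (k : ℕ) :
    ∫ x : ℝ, x ^ (2 * k) * rexp (-x ^ 2 / 2) = √(2 * π) * (2 * k - 1 : ℕ)‼ := by
  have half_rpow : (1 / 2 : ℝ) ^ (-((2 * k : ℕ) + 1 : ℝ) / 2) = 2 ^ k * √2 := by
    rw [one_div, inv_rpow zero_le_two, ← rpow_neg zero_le_two, sqrt_eq_rpow, ← rpow_natCast,
      ← rpow_add two_pos]
    congr 1
    push_cast
    ring
  have gamma : Gamma (((2 * k : ℕ) + 1 : ℝ) / 2) = (2 * k - 1 : ℕ)‼ * √π / 2 ^ k := by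
    rw [← Gamma_nat_add_half]
    congr 1
    push_cast
    ring
  calc ∫ x : ℝ, x ^ (2 * k) * rexp (-x ^ 2 / 2)
      = ∫ x : ℝ, (fun y : ℝ => y ^ (2 * k) * rexp (-y ^ 2 / 2)) |x| := by
        simp only [(even_two_mul k).pow_abs, sq_abs]
    _ = 2 * ∫ x in Set.Ioi (0 : ℝ), x ^ ((2 * k : ℕ) : ℝ) * rexp (-(1 / 2) * x ^ (2 : ℝ)) := by
        rw [integral_comp_abs (f := fun y : ℝ => y ^ (2 * k) * rexp (-y ^ 2 / 2))]
        congr 1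
        refine setIntegral_congr_fun measurableSet_Ioi fun x _ => ?_
        rw [rpow_natCast, rpow_two]
        ring_nf
    _ = √(2 * π) * (2 * k - 1 : ℕ)‼ := by
        rw [integral_rpow_mul_exp_neg_mul_rpow two_pos
          (neg_one_lt_zero.trans_le (Nat.cast_nonneg _)) one_half_pos, half_rpow,
          gamma, sqrt_mul zero_le_two]
        field_simp

namespace ProbabilityTheory

theorem integrable_pow_gaussianReal (μ : ℝ) (v : ℝ≥0) (n : ℕ) :
    Integrable (fun x : ℝ => x ^ n) (gaussianReal μ v) := by
  refine (integrable_norm_iff (by fun_prop)).1 ?_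
  simpa only [norm_pow, id] using (memLp_id_gaussianReal n).integrable_norm_pow'

theorem integral_pow_gaussianReal_of_odd (v : ℝ≥0) {n : ℕ} (hn : Odd n) :
    ∫ x, x ^ n ∂gaussianReal 0 v = 0 := by
  have h := integral_map (μ := gaussianReal 0 v) (f := fun x : ℝ => x ^ n)
    measurable_neg.aemeasurable (by fun_prop)
  simp only [gaussianReal_map_neg, neg_zero, hn.neg_pow, integral_neg] at h
  linarith

theorem integral_pow_gaussianReal_two_mul (k : ℕ) :
    ∫ x, x ^ (2 * k) ∂gaussianReal 0 1 = (2 * k - 1 : ℕ)‼ := by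
  have h2π : √(2 * π) ≠ 0 := (sqrt_pos.2 (by positivity)).ne'
  simp only [integral_gaussianReal_eq_integral_smul one_ne_zero, gaussianPDFReal, smul_eq_mul,
    NNReal.coe_one, mul_one, sub_zero, mul_assoc, integral_const_mul]
  simp_rw [mul_comm (rexp _), integral_pow_mul_exp_neg_sq_div_two, inv_mul_cancel_left₀ h2π]

end ProbabilityTheory

section Monomials

variable {d : ℕ}

theorem integrable_prod_pow_stdGaussianVec (e : Fin d → ℕ) :
    Integrable (fun u : Fin d → ℝ => ∏ m, u m ^ e m) (stdGaussianVec d) :=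
  Integrable.fintype_prod fun m => integrable_pow_gaussianReal 0 1 (e m)

theorem integral_prod_pow_stdGaussianVec (e : Fin d → ℕ) :
    ∫ u, ∏ m, u m ^ e m ∂stdGaussianVec d = ∏ m, ∫ x, x ^ e m ∂gaussianReal 0 1 :=
  integral_fintype_prod_eq_prod fun m x => x ^ e m

theorem integral_prod_pow_stdGaussianVec_of_odd {e : Fin d → ℕ} {m : Fin d} (hm : Odd (e m)) :
    ∫ u, ∏ m, u m ^ e m ∂stdGaussianVec d = 0 := by
  rw [integral_prod_pow_stdGaussianVec]
  exact prod_eq_zero (mem_univ m) (integral_pow_gaussianReal_of_odd 1 hm)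

def monomialExponent (i j k l p : Fin d) (c : ℕ) (m : Fin d) : ℕ :=
  (if m = i then 1 else 0) + (if m = j then 1 else 0) + (if m = k then 1 else 0)
    + (if m = l then 1 else 0) + (if m = p then c else 0)

theorem mul_mul_mul_mul_pow_eq_prod_pow (u : Fin d → ℝ) (i j k l p : Fin d) (c : ℕ) :
    u i * u j * u k * u l * u p ^ c = ∏ m, u m ^ monomialExponent i j k l p c m := by
  simp only [monomialExponent, pow_add, prod_mul_distrib, pow_ite, pow_one, pow_zero,
    prod_ite_eq', mem_univ, if_true]

theorem integrable_mul_mul_mul_mul_pow (i j k l p : Fin d) (c : ℕ) :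
    Integrable (fun u : Fin d → ℝ => u i * u j * u k * u l * u p ^ c) (stdGaussianVec d) := by
  simp_rw [mul_mul_mul_mul_pow_eq_prod_pow]
  exact integrable_prod_pow_stdGaussianVec _

theorem exists_odd_monomialExponent {i j k l p : Fin d} (hji : j < i) (hkl : k < l)
    (hne : ¬(k = j ∧ l = i)) (n : ℕ) : ∃ m, Odd (monomialExponent i j k l p (2 * n) m) := by
  -- already the exponents of `u i` and `u j` cannot both be even
  by_contra! h
  have hi := h i
  have hj := h j
  simp only [monomialExponent, Nat.not_odd_iff_even, Nat.even_iff] at hi hj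
  split_ifs at hi hj <;> omega

theorem integral_sq_mul_sq_mul_pow {i j : Fin d} (hij : i ≠ j) (p : Fin d) (n : ℕ) :
    ∫ u, u i * u j * u j * u i * u p ^ (2 * n) ∂stdGaussianVec d
      = (2 * n - 1 : ℕ)‼ + (((2 * n + 1 : ℕ)‼ : ℝ) - (2 * n - 1 : ℕ)‼)
          * ((if p = i then 1 else 0) + (if p = j then 1 else 0)) := by
  have second_moment : ∫ x, x ^ 2 ∂gaussianReal 0 1 = 1 := by
    simpa using integral_pow_gaussianReal_two_mul 1
  simp_rw [mul_mul_mul_mul_pow_eq_prod_pow, integral_prod_pow_stdGaussianVec]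
  -- every coordinate other than `p` carries exponent `0` or `2`, hence moment `1`
  rw [prod_eq_single p (fun m _ hmp => ?_) (by simp)]
  · have hexp : monomialExponent i j j i p (2 * n) p
        = 2 * (n + ((if p = i then 1 else 0) + (if p = j then 1 else 0))) := by
      simp only [monomialExponent]
      split_ifs <;> omega
    rw [hexp, integral_pow_gaussianReal_two_mul]
    split_ifs with hpi hpj hpj
    · exact absurd (hpi.symm.trans hpj) hij
    all_goals simp [show 2 * (n + 1) - 1 = 2 * n + 1 by omega]
  · simp only [monomialExponent, if_neg hmp]
    split_ifs <;> simp_all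

theorem integral_monomial_of_lt {i j k l : Fin d} (hji : j < i) (hkl : k < l) (p : Fin d)
    (n : ℕ) :
    ∫ u, u i * u j * u k * u l * u p ^ (2 * n) ∂stdGaussianVec d
      = if k = j ∧ l = i then (2 * n - 1 : ℕ)‼ + (((2 * n + 1 : ℕ)‼ : ℝ) - (2 * n - 1 : ℕ)‼)
          * ((if p = i then 1 else 0) + (if p = j then 1 else 0)) else 0 := by
  by_cases h : k = j ∧ l = i
  · obtain ⟨rfl, rfl⟩ := h
    rw [if_pos ⟨rfl, rfl⟩]
    exact integral_sq_mul_sq_mul_pow hji.ne' p n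
  · rw [if_neg h]
    obtain ⟨m, hm⟩ := exists_odd_monomialExponent hji hkl h n
    simp_rw [mul_mul_mul_mul_pow_eq_prod_pow]
    exact integral_prod_pow_stdGaussianVec_of_odd hm

end Monomials

theorem integral_lower_mul_upper_mul_pow {d : ℕ} (A : Matrix (Fin d) (Fin d) ℝ) (p : Fin d)
    (n : ℕ) :
    ∫ u, (∑ i, ∑ j ∈ univ.filter (· < i), A i j * u i * u j)
        * (∑ k, ∑ l ∈ univ.filter (k < ·), A k l * u k * u l) * u p ^ (2 * n) ∂stdGaussianVec d
      = (2 * n - 1 : ℕ)‼ * ∑ i, ∑ j ∈ univ.filter (· < i), A i j * A j i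
        + (((2 * n + 1 : ℕ)‼ : ℝ) - (2 * n - 1 : ℕ)‼)
          * (∑ i ∈ univ.filter (p < ·), A i p * A p i + ∑ j ∈ univ.filter (· < p), A p j * A j p) := by
  have integrable_monomial := integrable_mul_mul_mul_mul_pow (p := p) (c := 2 * n)
  simp_rw [sum_lower_mul_sum_upper_mul_eq_sum]
  simp (disch := intros; fun_prop) only [integral_finsetSum, integral_const_mul]
  calc _ = ∑ i, ∑ j ∈ univ.filter (· < i), A i j * A j i * ((2 * n - 1 : ℕ)‼
          + (((2 * n + 1 : ℕ)‼ : ℝ) - (2 * n - 1 : ℕ)‼)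
            * ((if p = i then 1 else 0) + (if p = j then 1 else 0))) := by
        refine sum_congr rfl fun i _ => sum_congr rfl fun j hj => ?_
        have hji : j < i := by simpa using hj
        rw [sum_congr rfl fun k _ => sum_congr rfl fun l hl => by
          rw [integral_monomial_of_lt hji (by simpa using hl)]]
        simp [ite_and, hji]
    _ = (2 * n - 1 : ℕ)‼ * ∑ i, ∑ j ∈ univ.filter (· < i), A i j * A j i
          + (((2 * n + 1 : ℕ)‼ : ℝ) - (2 * n - 1 : ℕ)‼) * ∑ i, ∑ j ∈ univ.filter (· < i),
            A i j * A j i * ((if p = i then 1 else 0) + (if p = j then 1 else 0)) := by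
        simp only [mul_sum, ← sum_add_distrib]
        exact sum_congr rfl fun i _ => sum_congr rfl fun j _ => by ring
    _ = _ := by
        congr 2
        exact sum_lower_mul_ite_add_ite (fun i j => A i j * A j i) p

theorem lower_upper_cross_term_general {d : ℕ}
    (A : Matrix (Fin d) (Fin d) ℝ) (p : Fin d) :
    (∫ u, (∑ i, ∑ j ∈ Finset.univ.filter (fun j => j < i), A i j * u i * u j)
          * (∑ k, ∑ l ∈ Finset.univ.filter (fun l => k < l), A k l * u k * u l)
        ∂(stdGaussianVec d)
      = ∑ i, ∑ j ∈ Finset.univ.filter (fun j => j < i), A i j * A j i)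
    ∧ (∫ u, (∑ i, ∑ j ∈ Finset.univ.filter (fun j => j < i),
            A i j * u i * u j * u p)
          * (∑ k, ∑ l ∈ Finset.univ.filter (fun l => k < l),
            A k l * u k * u l * u p)
        ∂(stdGaussianVec d)
      = (∑ i, ∑ j ∈ Finset.univ.filter (fun j => j < i), A i j * A j i)
        + 2 * (∑ i ∈ Finset.univ.filter (fun i => p < i), A i p * A p i)
        + 2 * (∑ j ∈ Finset.univ.filter (fun j => j < p), A p j * A j p))
    ∧ (∫ u, (∑ i, ∑ j ∈ Finset.univ.filter (fun j => j < i),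
            A i j * u i * u j * (u p) ^ 2)
          * (∑ k, ∑ l ∈ Finset.univ.filter (fun l => k < l),
            A k l * u k * u l * (u p) ^ 2)
        ∂(stdGaussianVec d)
      = 3 * (∑ i, ∑ j ∈ Finset.univ.filter (fun j => j < i), A i j * A j i)
        + 12 * (∑ i ∈ Finset.univ.filter (fun i => p < i), A i p * A p i)
        + 12 * (∑ j ∈ Finset.univ.filter (fun j => j < p), A p j * A j p)) := by
  have moments := integral_lower_mul_upper_mul_pow A p
  refine ⟨?_, ?_, ?_⟩
  · simpa using moments 0
  · refine Eq.trans ?_ ((moments 1).trans ?_)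
    · congr 1; funext u; simp only [← sum_mul]; ring
    · norm_num [Nat.doubleFactorial]; ring
  · refine Eq.trans ?_ ((moments 2).trans ?_)
    · congr 1; funext u; simp only [← sum_mul]; ring
    · norm_num [Nat.doubleFactorial]; ring

theorem lower_upper_cross_term {d : ℕ} (hd : 1 ≤ d)
    (A : Matrix (Fin d) (Fin d) ℝ) (p : Fin d) :
    (∫ u, (∑ i, ∑ j ∈ Finset.univ.filter (fun j => j < i), A i j * u i * u j)
          * (∑ k, ∑ l ∈ Finset.univ.filter (fun l => k < l), A k l * u k * u l)
        ∂(stdGaussianVec d)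
      = ∑ i, ∑ j ∈ Finset.univ.filter (fun j => j < i), A i j * A j i)
    ∧ (∫ u, (∑ i, ∑ j ∈ Finset.univ.filter (fun j => j < i),
            A i j * u i * u j * u p)
          * (∑ k, ∑ l ∈ Finset.univ.filter (fun l => k < l),
            A k l * u k * u l * u p)
        ∂(stdGaussianVec d)
      = (∑ i, ∑ j ∈ Finset.univ.filter (fun j => j < i), A i j * A j i)
        + 2 * (∑ i ∈ Finset.univ.filter (fun i => p < i), A i p * A p i)
        + 2 * (∑ j ∈ Finset.univ.filter (fun j => j < p), A p j * A j p))
    ∧ (∫ u, (∑ i, ∑ j ∈ Finset.univ.filter (fun j => j < i),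
            A i j * u i * u j * (u p) ^ 2)
          * (∑ k, ∑ l ∈ Finset.univ.filter (fun l => k < l),
            A k l * u k * u l * (u p) ^ 2)
        ∂(stdGaussianVec d)
      = 3 * (∑ i, ∑ j ∈ Finset.univ.filter (fun j => j < i), A i j * A j i)
        + 12 * (∑ i ∈ Finset.univ.filter (fun i => p < i), A i p * A p i)
        + 12 * (∑ j ∈ Finset.univ.filter (fun j => j < p), A p j * A j p)) :=
  lower_upper_cross_term_general A p
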